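/- arXiv:1509.07445 — 3 statements merged into one kernel-verified Lean document; each statement's English description precedes it below -/
import Mathlib

section
/- Let X be a finite set of keys, let f, g : X → ℝ≥0 satisfy sum(f) > 0 and sum(g) > 0, and suppose a·g_x ≤ f_x ≤ b·g_x for all x with 0 < a ≤ b; set ρ = b/a. Fix k > 0 and let π : X → (0,1] satisfy π_x ≥ min{1, k·f_x/sum(f)} for every x. Let S include each key x independently with probability π_x and let Ŝ(g;H) = Σ_{x∈S∩H} g_x/π_x. Then for every H ⊆ X with sum(g;H) > 0, the multiplicative Chernoff-type bounds hold: Pr[|Ŝ(g;H) − sum(g;H)| > δ·sum(g;H)] ≤ 2·exp(−q^{(g)}(H)·k·ρ^{−2}·δ²/3) for 0 < δ ≤ 1, and Pr[Ŝ(g;H) − sum(g;H) > δ·sum(g;H)] ≤ exp(−q^{(g)}(H)·k·ρ^{−2}·δ/3) for δ > 1. -/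
/-!
Since `π x ≥ k f x / sum(f)` and `a g ≤ f ≤ b g`, every key not sampled with certainty has
inverse-probability weight `g x / π x ≤ ρ sum(g) / k ≤ M := ρ² sum(g) / k`. The estimator is thus
a sum of independent terms, each deterministic or in `[0, M]`, and the Chernoff argument applies:
the moment generating function factorises over the keys, and convexity of `exp` bounds the factor
of `x` by `exp (t g x + (g x / M) (exp (t M) - 1 - t M))`. A quadratic bound on `exp u - 1 - u`
for `|u| ≤ 1` and the choice `t M = 9 min(δ, 1) / 13` give the rates, as
`sum(g;H) / M = q⁽ᵍ⁾(H) k ρ⁻²`.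
-/

open Finset

/-- Probability that a Poisson sample with independent inclusion probabilities `p`
equals exactly the subset `S`. -/
noncomputable def sampleProb {X : Type*} [Fintype X] [DecidableEq X]
    (p : X → ℝ) (S : Finset X) : ℝ :=
  (∏ x ∈ S, p x) * ∏ x ∈ Sᶜ, (1 - p x)

open scoped Classical in
/-- Probability of an event of the sample. -/
noncomputable def pprob {X : Type*} [Fintype X] [DecidableEq X]
    (p : X → ℝ) (E : Finset X → Prop) : ℝ :=
  ∑ S : Finset X, if E S then sampleProb p S else 0

section PoissonSampling

open Real

variable {X : Type*} [Fintype X] [DecidableEq X] {p : X → ℝ}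

lemma sampleProb_nonneg (h0 : ∀ x, 0 ≤ p x) (h1 : ∀ x, p x ≤ 1) (S : Finset X) :
    0 ≤ sampleProb p S :=
  mul_nonneg (prod_nonneg fun x _ => h0 x) (prod_nonneg fun x _ => sub_nonneg.2 (h1 x))

lemma sum_sampleProb_mul_prod_inter (p c : X → ℝ) (H : Finset X) :
    ∑ S, sampleProb p S * ∏ x ∈ S ∩ H, c x = ∏ x ∈ H, (1 - p x + p x * c x) := by
  calc ∑ S, sampleProb p S * ∏ x ∈ S ∩ H, c x
      = ∑ S, (∏ x ∈ S, p x * if x ∈ H then c x else 1) * ∏ x ∈ Sᶜ, (1 - p x) := by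
        refine sum_congr rfl fun S _ => ?_
        rw [sampleProb, prod_mul_distrib, ← prod_ite_mem S H c]
        ring
    _ = ∏ x, (p x * (if x ∈ H then c x else 1) + (1 - p x)) := (Fintype.prod_add _ _).symm
    _ = ∏ x ∈ H, (1 - p x + p x * c x) := by
        rw [← prod_subset (subset_univ H) fun x _ hx => by simp [hx]]
        exact prod_congr rfl fun x hx => by simp [hx]; ring

lemma pprob_le_add_of_imp_or (h0 : ∀ x, 0 ≤ p x) (h1 : ∀ x, p x ≤ 1)
    {E P Q : Finset X → Prop} (hE : ∀ S, E S → P S ∨ Q S) :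
    pprob p E ≤ pprob p P + pprob p Q := by
  rw [pprob, pprob, pprob, ← sum_add_distrib]
  refine sum_le_sum fun S _ => ?_
  have := sampleProb_nonneg h0 h1 S
  by_cases hS : E S
  · rcases hE S hS with h | h <;> split_ifs <;> simp_all
  · split_ifs <;> simp_all

lemma pprob_le_exp_neg_mul_prod (h0 : ∀ x, 0 ≤ p x) (h1 : ∀ x, p x ≤ 1) (w : X → ℝ)
    (H : Finset X) {E : Finset X → Prop} {s : ℝ} (hE : ∀ S, E S → s ≤ ∑ x ∈ S ∩ H, w x) :
    pprob p E ≤ exp (-s) * ∏ x ∈ H, (1 - p x + p x * exp (w x)) := by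
  rw [← sum_sampleProb_mul_prod_inter, mul_sum, pprob]
  refine sum_le_sum fun S _ => ?_
  have hS := sampleProb_nonneg h0 h1 S
  split_ifs with h
  · rw [← exp_sum, mul_left_comm, ← exp_add]
    exact le_mul_of_one_le_right hS (one_le_exp (by linarith [hE S h]))
  · positivity

end PoissonSampling

section ExpBounds

open Real

/- `13 / 18 = 1 / 2 + 2 / 9`: the quadratic Taylor coefficient plus the cubic remainder constant
of `Real.exp_bound`. -/
lemma exp_sub_one_sub_le_mul_sq {u : ℝ} (hu : |u| ≤ 1) : exp u - 1 - u ≤ 13 / 18 * u ^ 2 := by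
  have h := (abs_le.mp (exp_bound hu (n := 3) (by norm_num))).2
  norm_num [sum_range_succ, Nat.factorial] at h
  have h3 : |u| ^ 3 ≤ u ^ 2 := by
    simpa only [sq_abs] using pow_le_pow_of_le_one (abs_nonneg u) hu (by norm_num : 2 ≤ 3)
  nlinarith

lemma exp_mul_sub_one_sub_le {t w M : ℝ} (hM : 0 < M) (hw0 : 0 ≤ w) (hwM : w ≤ M) :
    exp (t * w) - 1 - t * w ≤ w / M * (exp (t * M) - 1 - t * M) := by
  have hθ0 : 0 ≤ w / M := div_nonneg hw0 hM.le
  have hθ1 : w / M ≤ 1 := (div_le_one hM).2 hwM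
  have hθ : w / M * (t * M) = t * w := by field_simp
  have h := convexOn_exp.2 (Set.mem_univ (t * M)) (Set.mem_univ 0) hθ0 (sub_nonneg.2 hθ1)
    (add_sub_cancel _ _)
  simp only [smul_eq_mul, mul_zero, add_zero, exp_zero, mul_one, hθ] at h
  linarith

lemma one_sub_add_mul_exp_le_exp {p g M t : ℝ} (hM : 0 < M) (hg : 0 ≤ g) (hp0 : 0 < p)
    (hp1 : p ≤ 1) (hw : p < 1 → g / p ≤ M) :
    1 - p + p * exp (t * (g / p)) ≤ exp (t * g + g / M * (exp (t * M) - 1 - t * M)) := by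
  have hφ : 0 ≤ g / M * (exp (t * M) - 1 - t * M) :=
    mul_nonneg (div_nonneg hg hM.le) (by linarith [add_one_le_exp (t * M)])
  rcases hp1.eq_or_lt with rfl | hp1
  · simpa using exp_le_exp.2 (le_add_of_nonneg_right (a := t * g) hφ)
  have hpw : p * (g / p) = g := mul_div_cancel₀ g hp0.ne'
  have hconv := exp_mul_sub_one_sub_le (t := t) hM (div_nonneg hg hp0.le) (hw hp1)
  calc 1 - p + p * exp (t * (g / p))
      = 1 + (t * (p * (g / p)) + p * (exp (t * (g / p)) - 1 - t * (g / p))) := by ring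
    _ ≤ 1 + (t * g + p * (g / p / M * (exp (t * M) - 1 - t * M))) := by
      rw [hpw]; gcongr
    _ = 1 + (t * g + g / M * (exp (t * M) - 1 - t * M)) := by
      rw [← mul_assoc, mul_div_assoc', hpw]
    _ ≤ _ := by linarith [add_one_le_exp (t * g + g / M * (exp (t * M) - 1 - t * M))]

end ExpBounds

structure HasBoundedWeights {X : Type*} (p g : X → ℝ) (M : ℝ) : Prop where
  prob_pos : ∀ x, 0 < p x
  prob_le_one : ∀ x, p x ≤ 1
  nonneg : ∀ x, 0 ≤ g x
  bound_pos : 0 < M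
  weight_le : ∀ x, p x < 1 → g x / p x ≤ M

namespace HasBoundedWeights

open Real

variable {X : Type*} {p g : X → ℝ} {M : ℝ}

theorem sum_div_nonneg (hB : HasBoundedWeights p g M) (H : Finset X) :
    0 ≤ (∑ x ∈ H, g x) / M :=
  div_nonneg (sum_nonneg fun x _ => hB.nonneg x) hB.bound_pos.le

variable [Fintype X] [DecidableEq X]

theorem pprob_le_exp (hB : HasBoundedWeights p g M) (H : Finset X) {E : Finset X → Prop}
    {t d : ℝ} (hE : ∀ S, E S → d ≤ t * (∑ x ∈ S ∩ H, g x / p x - ∑ x ∈ H, g x)) :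
    pprob p E ≤ exp (-d + (∑ x ∈ H, g x) / M * (exp (t * M) - 1 - t * M)) := by
  have hmarkov := pprob_le_exp_neg_mul_prod (fun x => (hB.prob_pos x).le) hB.prob_le_one
    (fun x => t * (g x / p x)) H (s := d + t * ∑ x ∈ H, g x)
    fun S hS => by rw [← mul_sum]; linarith [hE S hS]
  refine hmarkov.trans ?_
  calc exp (-(d + t * ∑ x ∈ H, g x)) * ∏ x ∈ H, (1 - p x + p x * exp (t * (g x / p x)))
      ≤ exp (-(d + t * ∑ x ∈ H, g x)) *
          ∏ x ∈ H, exp (t * g x + g x / M * (exp (t * M) - 1 - t * M)) := by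
        refine mul_le_mul_of_nonneg_left (prod_le_prod (fun x _ => ?_) fun x _ => ?_) (exp_pos _).le
        · nlinarith [hB.prob_le_one x, hB.prob_pos x, exp_pos (t * (g x / p x))]
        · exact one_sub_add_mul_exp_le_exp hB.bound_pos (hB.nonneg x) (hB.prob_pos x)
            (hB.prob_le_one x) (hB.weight_le x)
    _ = _ := by
        rw [← exp_sum, ← exp_add, sum_add_distrib, ← mul_sum, ← sum_mul, ← sum_div]
        congr 1
        ring

theorem pprob_upper_tail_le (hB : HasBoundedWeights p g M) (H : Finset X) {δ u : ℝ}
    (hu0 : 0 ≤ u) (hu1 : u ≤ 1) :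
    pprob p (fun S => δ * ∑ x ∈ H, g x < ∑ x ∈ S ∩ H, g x / p x - ∑ x ∈ H, g x) ≤
      exp (-((∑ x ∈ H, g x) / M * (u * δ - 13 / 18 * u ^ 2))) := by
  have hM := hB.bound_pos
  refine (hB.pprob_le_exp H (t := u / M) (d := u / M * (δ * ∑ x ∈ H, g x))
    fun S hS => mul_le_mul_of_nonneg_left hS.le (by positivity)).trans (exp_le_exp.2 ?_)
  have hc := hB.sum_div_nonneg H
  have hφ := mul_le_mul_of_nonneg_left
    (exp_sub_one_sub_le_mul_sq (u := u) (by rwa [abs_of_nonneg hu0])) hc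
  rw [div_mul_cancel₀ u hM.ne']
  have : u / M * (δ * ∑ x ∈ H, g x) = (∑ x ∈ H, g x) / M * (u * δ) := by ring
  linarith

theorem pprob_lower_tail_le (hB : HasBoundedWeights p g M) (H : Finset X) {δ u : ℝ}
    (hu0 : 0 ≤ u) (hu1 : u ≤ 1) :
    pprob p (fun S => δ * ∑ x ∈ H, g x < ∑ x ∈ H, g x - ∑ x ∈ S ∩ H, g x / p x) ≤
      exp (-((∑ x ∈ H, g x) / M * (u * δ - 13 / 18 * u ^ 2))) := by
  have hM := hB.bound_pos
  refine (hB.pprob_le_exp H (t := -(u / M)) (d := u / M * (δ * ∑ x ∈ H, g x))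
    fun S hS => ?_).trans (exp_le_exp.2 ?_)
  · rw [neg_mul, ← mul_neg, neg_sub]
    exact mul_le_mul_of_nonneg_left hS.le (by positivity)
  have hc := hB.sum_div_nonneg H
  have hφ := mul_le_mul_of_nonneg_left
    (exp_sub_one_sub_le_mul_sq (u := -u) (by rwa [abs_neg, abs_of_nonneg hu0])) hc
  rw [neg_mul, div_mul_cancel₀ u hM.ne']
  have : u / M * (δ * ∑ x ∈ H, g x) = (∑ x ∈ H, g x) / M * (u * δ) := by ring
  linarith

/- `u = 9δ/13` minimises `13/18 u² - uδ`, with minimum `-9δ²/26 ≤ -δ²/3`. -/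
theorem pprob_abs_sub_gt_le (hB : HasBoundedWeights p g M) (H : Finset X) {δ : ℝ}
    (hδ0 : 0 ≤ δ) (hδ1 : δ ≤ 1) :
    pprob p (fun S => |∑ x ∈ S ∩ H, g x / p x - ∑ x ∈ H, g x| > δ * ∑ x ∈ H, g x) ≤
      2 * exp (-((∑ x ∈ H, g x) / M * δ ^ 2 / 3)) := by
  have hc := hB.sum_div_nonneg H
  have hexp : exp (-((∑ x ∈ H, g x) / M * (9 * δ / 13 * δ - 13 / 18 * (9 * δ / 13) ^ 2))) ≤
      exp (-((∑ x ∈ H, g x) / M * δ ^ 2 / 3)) :=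
    exp_le_exp.2 (by nlinarith [mul_nonneg hc (sq_nonneg δ)])
  have hu0 : 0 ≤ 9 * δ / 13 := by positivity
  have hu1 : 9 * δ / 13 ≤ 1 := by linarith
  calc _ ≤ _ := pprob_le_add_of_imp_or (fun x => (hB.prob_pos x).le) hB.prob_le_one
          fun S hS => (lt_abs.1 hS).imp id fun h => by linarith
    _ ≤ _ := add_le_add ((hB.pprob_upper_tail_le H hu0 hu1).trans hexp)
          ((hB.pprob_lower_tail_le H hu0 hu1).trans hexp)
    _ = _ := (two_mul _).symm

theorem pprob_upper_tail_le_of_one_le (hB : HasBoundedWeights p g M) (H : Finset X) {δ : ℝ}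
    (hδ : 1 ≤ δ) :
    pprob p (fun S => ∑ x ∈ S ∩ H, g x / p x - ∑ x ∈ H, g x > δ * ∑ x ∈ H, g x) ≤
      exp (-((∑ x ∈ H, g x) / M * δ / 3)) := by
  have hc := hB.sum_div_nonneg H
  refine (hB.pprob_upper_tail_le H (u := 9 / 13) (by norm_num) (by norm_num)).trans
    (exp_le_exp.2 ?_)
  nlinarith [mul_nonneg hc (sub_nonneg.2 hδ)]

end HasBoundedWeights

lemma div_le_of_pps_le {X : Type*} [Fintype X] {f g p : X → ℝ} {a b k : ℝ} (ha : 0 < a)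
    (hk : 0 < k) (hfs : 0 < ∑ x, f x) (hlow : ∀ x, a * g x ≤ f x) (hhigh : ∀ x, f x ≤ b * g x)
    {x : X} (hp0 : 0 < p x) (hp : min 1 (k * f x / ∑ y, f y) ≤ p x) (hx : p x < 1) :
    g x / p x ≤ b / a * (∑ y, g y) / k := by
  have hpps : k * f x ≤ p x * ∑ y, f y :=
    (div_le_iff₀ hfs).1 ((min_le_iff.1 hp).resolve_left hx.not_ge)
  have hF : ∑ y, f y ≤ b * ∑ y, g y := by rw [mul_sum]; exact sum_le_sum fun y _ => hhigh y
  rw [div_le_div_iff₀ hp0 hk, div_mul_eq_mul_div, div_mul_eq_mul_div, le_div_iff₀ ha]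
  nlinarith [hlow x, mul_le_mul_of_nonneg_left hF hp0.le]

theorem stmt4_general {X : Type*} [Fintype X] [DecidableEq X]
    (f g : X → ℝ) (hg0 : ∀ x, 0 ≤ g x)
    (hfs : 0 < ∑ x, f x) (hgs : 0 < ∑ x, g x)
    (a b : ℝ) (ha : 0 < a) (hab : a ≤ b)
    (hlow : ∀ x, a * g x ≤ f x) (hhigh : ∀ x, f x ≤ b * g x)
    (k : ℝ) (hk : 0 < k)
    (π : X → ℝ) (hπpos : ∀ x, 0 < π x) (hπle : ∀ x, π x ≤ 1)
    (hπ : ∀ x, min 1 (k * f x / ∑ y, f y) ≤ π x)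
    (H : Finset X)
    (est : Finset X → ℝ) (hest : ∀ S, est S = ∑ x ∈ S ∩ H, g x / π x) :
    (∀ δ : ℝ, 0 < δ → δ ≤ 1 →
      pprob π (fun S => |est S - ∑ x ∈ H, g x| > δ * ∑ x ∈ H, g x) ≤
        2 * Real.exp (-((∑ x ∈ H, g x) / (∑ x, g x) * k * ((b / a) ^ 2)⁻¹ * δ ^ 2 / 3))) ∧
    (∀ δ : ℝ, 1 < δ →
      pprob π (fun S => est S - ∑ x ∈ H, g x > δ * ∑ x ∈ H, g x) ≤
        Real.exp (-((∑ x ∈ H, g x) / (∑ x, g x) * k * ((b / a) ^ 2)⁻¹ * δ / 3))) := by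
  obtain rfl : est = fun S => ∑ x ∈ S ∩ H, g x / π x := funext hest
  have hρ : 1 ≤ b / a := (one_le_div ha).2 hab
  have hB : HasBoundedWeights π g ((b / a) ^ 2 * (∑ x, g x) / k) :=
    { prob_pos := hπpos
      prob_le_one := hπle
      nonneg := hg0
      bound_pos := by positivity
      weight_le := fun x hx => (div_le_of_pps_le ha hk hfs hlow hhigh (hπpos x) (hπ x) hx).trans
        (by gcongr; exact le_self_pow₀ hρ two_ne_zero) }
  have hrate : (∑ x ∈ H, g x) / (∑ x, g x) * k * ((b / a) ^ 2)⁻¹ =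
      (∑ x ∈ H, g x) / ((b / a) ^ 2 * (∑ x, g x) / k) := by
    field_simp
  rw [hrate]
  exact ⟨fun δ hδ0 hδ1 => hB.pprob_abs_sub_gt_le H hδ0.le hδ1,
    fun δ hδ => hB.pprob_upper_tail_le_of_one_le H hδ.le⟩

/-- Multiplicative Chernoff-type bounds carry over when sampling
with any inclusion probabilities `π` that dominate the Poisson pps probabilities
`min{1, k·f_x / sum(f)}`, using the inverse-probability estimator with `π`. -/
theorem stmt4 {X : Type*} [Fintype X] [DecidableEq X]
    (f g : X → ℝ) (hf0 : ∀ x, 0 ≤ f x) (hg0 : ∀ x, 0 ≤ g x)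
    (hfs : 0 < ∑ x, f x) (hgs : 0 < ∑ x, g x)
    (a b : ℝ) (ha : 0 < a) (hab : a ≤ b)
    (hlow : ∀ x, a * g x ≤ f x) (hhigh : ∀ x, f x ≤ b * g x)
    (k : ℝ) (hk : 0 < k)
    (π : X → ℝ) (hπpos : ∀ x, 0 < π x) (hπle : ∀ x, π x ≤ 1)
    (hπ : ∀ x, min 1 (k * f x / ∑ y, f y) ≤ π x)
    (H : Finset X) (hH : 0 < ∑ x ∈ H, g x)
    (est : Finset X → ℝ) (hest : ∀ S, est S = ∑ x ∈ S ∩ H, g x / π x) :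
    (∀ δ : ℝ, 0 < δ → δ ≤ 1 →
      pprob π (fun S => |est S - ∑ x ∈ H, g x| > δ * ∑ x ∈ H, g x) ≤
        2 * Real.exp (-((∑ x ∈ H, g x) / (∑ x, g x) * k * ((b / a) ^ 2)⁻¹ * δ ^ 2 / 3))) ∧
    (∀ δ : ℝ, 1 < δ →
      pprob π (fun S => est S - ∑ x ∈ H, g x > δ * ∑ x ∈ H, g x) ≤
        Real.exp (-((∑ x ∈ H, g x) / (∑ x, g x) * k * ((b / a) ^ 2)⁻¹ * δ / 3))) :=
  stmt4_general f g hg0 hfs hgs a b ha hab hlow hhigh k hk π hπpos hπle hπ H est hest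
end

section
/- Let X be a finite set of keys, let F be a finite nonempty set of functions f : X → ℝ≥0 each with sum(f) > 0 and size parameters k_f > 0, and let g : X → ℝ≥0 with sum(g) > 0. Suppose that for each f ∈ F there are constants 0 < a_f ≤ b_f with a_f·g_x ≤ f_x ≤ b_f·g_x for all x; set ρ_f = b_f/a_f. Let S include each key x independently with the multi-objective pps probability p_x = min{1, max_{f∈F} k_f·f_x/sum(f)}. Then for every H ⊆ X with sum(g;H) > 0, the inverse-probability estimator Ŝ(g;H) = Σ_{x∈S∩H} g_x/p_x is unbiased for sum(g;H) and its coefficient of variation is at most min_{f∈F} sqrt(ρ_f/(q^{(g)}(H)·k_f)). -/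
/-!
Under Poisson sampling `E[1{T ⊆ S}] = ∏_{x ∈ T} p x`, so the inclusion indicators of distinct keys
are uncorrelated: the Horvitz–Thompson estimator `∑_{x ∈ S ∩ H} g x / p x` is unbiased and its
variance is `∑_{x ∈ H} g x² (1 - p x) / p x`. A term vanishes when `p x = 1`; otherwise
`p x ≥ k_f f x / sum(f) ≥ k_f g x / (ρ_f sum(g))`, so the term is at most `g x · ρ_f sum(g) / k_f`.
Summing over `H` bounds the variance by `ρ_f sum(g;H) sum(g) / k_f`, which is the CV bound.
-/

open Finset

noncomputable def pexpect {X : Type*} [Fintype X] [DecidableEq X]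
    (p : X → ℝ) (φ : Finset X → ℝ) : ℝ :=
  ∑ S : Finset X, sampleProb p S * φ S

noncomputable def pvar {X : Type*} [Fintype X] [DecidableEq X]
    (p : X → ℝ) (φ : Finset X → ℝ) : ℝ :=
  pexpect p (fun S => (φ S - pexpect p φ) ^ 2)

section PoissonSampling

variable {X : Type*} [Fintype X] [DecidableEq X]

theorem sum_sampleProb_mul_prod_compl (p v : X → ℝ) :
    ∑ S : Finset X, sampleProb p S * ∏ x ∈ Sᶜ, v x = ∏ x, (p x + (1 - p x) * v x) := by
  rw [prod_add, powerset_univ]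
  refine sum_congr rfl fun S _ => ?_
  rw [sampleProb, prod_mul_distrib, compl_eq_univ_sdiff]
  ring

theorem pexpect_indicator_subset (p : X → ℝ) (T : Finset X) :
    pexpect p (fun S => if T ⊆ S then 1 else 0) = ∏ x ∈ T, p x := by
  have hind : ∀ S : Finset X,
      (if T ⊆ S then (1 : ℝ) else 0) = ∏ z ∈ Sᶜ, if z ∉ T then 1 else 0 := by
    intro S
    simp only [prod_boole, mem_compl, not_imp_not, subset_iff]
  have hfactor : ∀ x,
      p x + (1 - p x) * (if x ∉ T then 1 else 0) = if x ∈ T then p x else 1 := by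
    intro x
    split_ifs <;> simp_all
  simp only [pexpect, hind, sum_sampleProb_mul_prod_compl, hfactor, prod_ite_mem, univ_inter]

theorem sum_sampleProb (p : X → ℝ) : ∑ S : Finset X, sampleProb p S = 1 := by
  simpa [pexpect] using pexpect_indicator_subset p ∅

theorem pexpect_sum_mul {ι : Type*} (p : X → ℝ) (s : Finset ι) (c : ι → ℝ)
    (φ : ι → Finset X → ℝ) :
    pexpect p (fun S => ∑ i ∈ s, c i * φ i S) = ∑ i ∈ s, c i * pexpect p (φ i) := by
  simp only [pexpect, mul_sum]
  rw [sum_comm]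
  exact sum_congr rfl fun i _ => sum_congr rfl fun S _ => mul_left_comm _ _ _

theorem pvar_eq_pexpect_sq_sub (p : X → ℝ) (φ : Finset X → ℝ) :
    pvar p φ = pexpect p (fun S => φ S ^ 2) - pexpect p φ ^ 2 := by
  rw [pvar]
  set m := pexpect p φ
  have hmean : ∑ S, sampleProb p S * φ S = m := rfl
  have hexpand : ∀ S, sampleProb p S * (φ S - m) ^ 2 = sampleProb p S * φ S ^ 2
      - 2 * m * (sampleProb p S * φ S) + m ^ 2 * sampleProb p S := fun S => by ring
  simp only [pexpect, hexpand, sum_add_distrib, sum_sub_distrib, ← mul_sum, sum_sampleProb, hmean]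
  ring

theorem sum_mem_eq_sum_indicator (c : X → ℝ) (S : Finset X) :
    ∑ x ∈ S, c x = ∑ x, c x * if {x} ⊆ S then 1 else 0 := by
  simp [singleton_subset_iff]

theorem sq_sum_mem_eq (c : X → ℝ) (S : Finset X) :
    (∑ x ∈ S, c x) ^ 2 = ∑ x, c x * ∑ y, c y * if {x, y} ⊆ S then 1 else 0 := by
  rw [sq, sum_mul_sum]
  simp [insert_subset_iff, ite_and, mul_sum]

theorem pexpect_sum_mem (p c : X → ℝ) :
    pexpect p (fun S => ∑ x ∈ S, c x) = ∑ x, c x * p x := by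
  simp_rw [sum_mem_eq_sum_indicator c]
  simp only [pexpect_sum_mul, pexpect_indicator_subset, prod_singleton]

theorem pvar_sum_mem (p c : X → ℝ) :
    pvar p (fun S => ∑ x ∈ S, c x) = ∑ x, c x ^ 2 * (p x * (1 - p x)) := by
  have hpair : ∀ x y : X, ∏ z ∈ {x, y}, p z - p x * p y
      = if x = y then p x * (1 - p x) else 0 := by
    intro x y
    rcases eq_or_ne x y with rfl | hxy
    · simp only [mem_singleton, insert_eq_of_mem, prod_singleton, ↓reduceIte]
      ring
    · simp [hxy]
  have hsq_mean : (∑ x, c x * p x) ^ 2 = ∑ x, c x * ∑ y, c y * (p x * p y) := by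
    rw [sq, sum_mul_sum]
    exact sum_congr rfl fun x _ => by rw [mul_sum]; exact sum_congr rfl fun y _ => by ring
  rw [pvar_eq_pexpect_sq_sub, pexpect_sum_mem]
  simp_rw [sq_sum_mem_eq c]
  simp only [pexpect_sum_mul, pexpect_indicator_subset]
  simp only [hsq_mean, ← sum_sub_distrib, ← mul_sub, hpair, mul_ite, mul_zero, sum_ite_eq,
    mem_univ, if_true]
  exact sum_congr rfl fun x _ => by ring

theorem pexpect_horvitzThompson (p g : X → ℝ) (H : Finset X)
    (hp : ∀ x ∈ H, g x ≠ 0 → p x ≠ 0) :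
    pexpect p (fun S => ∑ x ∈ S ∩ H, g x / p x) = ∑ x ∈ H, g x := by
  simp_rw [← sum_ite_mem]
  rw [pexpect_sum_mem]
  simp only [ite_mul, zero_mul, sum_ite_mem, univ_inter]
  refine sum_congr rfl fun x hx => ?_
  by_cases hg : g x = 0
  · simp [hg]
  · exact div_mul_cancel₀ _ (hp x hx hg)

theorem pvar_horvitzThompson (p g : X → ℝ) (H : Finset X) :
    pvar p (fun S => ∑ x ∈ S ∩ H, g x / p x)
      = ∑ x ∈ H, (g x / p x) ^ 2 * (p x * (1 - p x)) := by
  simp_rw [← sum_ite_mem]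
  rw [pvar_sum_mem]
  simp only [ite_pow, ite_mul, zero_pow two_ne_zero, zero_mul, sum_ite_mem, univ_inter]

end PoissonSampling

theorem sq_div_mul_one_sub_le {g p t : ℝ} (hg : 0 ≤ g) (ht : 0 < t)
    (hp : min 1 (t * g) ≤ p) (hp1 : p ≤ 1) :
    (g / p) ^ 2 * (p * (1 - p)) ≤ g / t := by
  rcases hg.eq_or_lt with rfl | hg
  · simp
  rcases hp1.eq_or_lt with rfl | hp1
  · simp only [div_one, sub_self, mul_zero]
    positivity
  have htg : t * g ≤ p := (min_le_iff.mp hp).resolve_left hp1.not_ge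
  have hp0 : 0 < p := (mul_pos ht hg).trans_le htg
  have hgp : g / p ≤ 1 / t := (div_le_div_iff₀ hp0 ht).2 (by linarith)
  calc (g / p) ^ 2 * (p * (1 - p)) = g * (g / p) * (1 - p) := by field_simp
    _ ≤ g * (g / p) := mul_le_of_le_one_right (by positivity) (by linarith)
    _ ≤ g * (1 / t) := mul_le_mul_of_nonneg_left hgp hg.le
    _ = g / t := mul_one_div g t

theorem sandwich_mul_div_sum_le {X : Type*} [Fintype X] {f g : X → ℝ} {k a b : ℝ}
    (hk : 0 ≤ k) (ha : 0 ≤ a) (hg : ∀ x, 0 ≤ g x) (hfs : 0 < ∑ x, f x)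
    (hlow : ∀ x, a * g x ≤ f x) (hhigh : ∀ x, f x ≤ b * g x) (x : X) :
    k * a / (b * ∑ y, g y) * g x ≤ k * f x / ∑ y, f y := by
  have hsum : ∑ y, f y ≤ b * ∑ y, g y := by
    rw [mul_sum]; exact sum_le_sum fun y _ => hhigh y
  rw [div_mul_eq_mul_div, mul_assoc]
  exact div_le_div₀ (mul_nonneg hk ((mul_nonneg ha (hg x)).trans (hlow x)))
    (mul_le_mul_of_nonneg_left (hlow x) hk) hfs hsum

theorem stmt9_general {X : Type*} [Fintype X] [DecidableEq X]
    (F : Finset (X → ℝ)) (hF : F.Nonempty)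
    (hfs : ∀ f ∈ F, 0 < ∑ x, f x)
    (kf : (X → ℝ) → ℝ) (hk : ∀ f ∈ F, 0 < kf f)
    (g : X → ℝ) (hg0 : ∀ x, 0 ≤ g x) (hgs : 0 < ∑ x, g x)
    (a b : (X → ℝ) → ℝ) (ha : ∀ f ∈ F, 0 < a f) (hab : ∀ f ∈ F, a f ≤ b f)
    (hlow : ∀ f ∈ F, ∀ x, a f * g x ≤ f x) (hhigh : ∀ f ∈ F, ∀ x, f x ≤ b f * g x)
    (p : X → ℝ)
    (hp : ∀ x, p x = min 1 (F.sup' hF fun f => kf f * f x / ∑ y, f y))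
    (H : Finset X)
    (est : Finset X → ℝ) (hest : ∀ S, est S = ∑ x ∈ S ∩ H, g x / p x) :
    pexpect p est = ∑ x ∈ H, g x ∧
    ∀ f ∈ F, pvar p est ≤ (b f / a f) * (∑ x ∈ H, g x) * (∑ x, g x) / kf f := by
  obtain rfl : est = fun S => ∑ x ∈ S ∩ H, g x / p x := funext hest
  have hthreshold_pos : ∀ f ∈ F, 0 < kf f * a f / (b f * ∑ y, g y) := fun f hf =>
    div_pos (mul_pos (hk f hf) (ha f hf)) (mul_pos ((ha f hf).trans_le (hab f hf)) hgs)
  have hp_lower : ∀ f ∈ F, ∀ x, min 1 (kf f * a f / (b f * ∑ y, g y) * g x) ≤ p x :=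
    fun f hf x => (hp x).symm ▸ min_le_min_left 1
      ((sandwich_mul_div_sum_le (hk f hf).le (ha f hf).le hg0 (hfs f hf) (hlow f hf)
        (hhigh f hf) x).trans (le_sup' (fun f => kf f * f x / ∑ y, f y) hf))
  have hp_le_one : ∀ x, p x ≤ 1 := fun x => (hp x).symm ▸ min_le_left _ _
  refine ⟨pexpect_horvitzThompson p g H fun x _ hgx => ?_, fun f hf => ?_⟩
  · obtain ⟨f₀, hf₀⟩ := hF
    refine (lt_of_lt_of_le ?_ (hp_lower f₀ hf₀ x)).ne'
    exact lt_min one_pos (mul_pos (hthreshold_pos f₀ hf₀) ((hg0 x).lt_of_ne' hgx))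
  · rw [pvar_horvitzThompson]
    calc ∑ x ∈ H, (g x / p x) ^ 2 * (p x * (1 - p x))
        ≤ ∑ x ∈ H, g x / (kf f * a f / (b f * ∑ y, g y)) := sum_le_sum fun x _ =>
          sq_div_mul_one_sub_le (hg0 x) (hthreshold_pos f hf) (hp_lower f hf x) (hp_le_one x)
      _ = b f / a f * (∑ x ∈ H, g x) * (∑ x, g x) / kf f := by
          rw [← sum_div]
          have := (ha f hf).ne'
          have := (hk f hf).ne'
          field_simp

/-- Estimation quality of multi-objective pps samples: with
inclusion probabilities `min{1, max_{f∈F} k_f·f_x/sum(f)}`, the inverse-probability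
estimator of `sum(g;H)` is unbiased and for every `f ∈ F` its variance is at most
`ρ_f · sum(g;H) · sum(g) / k_f`, i.e., the CV is at most
`min_{f∈F} sqrt(ρ_f/(q^{(g)}(H)·k_f))`. -/
theorem stmt9 {X : Type*} [Fintype X] [DecidableEq X]
    (F : Finset (X → ℝ)) (hF : F.Nonempty)
    (hf0 : ∀ f ∈ F, ∀ x, 0 ≤ f x) (hfs : ∀ f ∈ F, 0 < ∑ x, f x)
    (kf : (X → ℝ) → ℝ) (hk : ∀ f ∈ F, 0 < kf f)
    (g : X → ℝ) (hg0 : ∀ x, 0 ≤ g x) (hgs : 0 < ∑ x, g x)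
    (a b : (X → ℝ) → ℝ) (ha : ∀ f ∈ F, 0 < a f) (hab : ∀ f ∈ F, a f ≤ b f)
    (hlow : ∀ f ∈ F, ∀ x, a f * g x ≤ f x) (hhigh : ∀ f ∈ F, ∀ x, f x ≤ b f * g x)
    (p : X → ℝ)
    (hp : ∀ x, p x = min 1 (F.sup' hF fun f => kf f * f x / ∑ y, f y))
    (H : Finset X) (hH : 0 < ∑ x ∈ H, g x)
    (est : Finset X → ℝ) (hest : ∀ S, est S = ∑ x ∈ S ∩ H, g x / p x) :
    pexpect p est = ∑ x ∈ H, g x ∧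
    ∀ f ∈ F, pvar p est ≤ (b f / a f) * (∑ x ∈ H, g x) * (∑ x, g x) / kf f :=
  stmt9_general F hF hfs kf hk g hg0 hgs a b ha hab hlow hhigh p hp H est hest
end

section
/- Let X be a finite set of keys with weights w : X → ℝ>0 and ranks r : X → ℝ>0, with no seed ties (for all distinct keys y, z and all T > 0, r_y/min(T,w_y) ≠ r_z/min(T,w_z)). For a key x define h_x = |{y ≠ x : w_y ≥ w_x and r_y < r_x}| and ℓ_x = |{y ≠ x : w_y < w_x and r_y/w_y < r_x/w_x}|. Then {y ≠ x : r_y/min(w_x, w_y) < r_x/w_x} is the disjoint union of the two sets counted by h_x and ℓ_x, and consequently x belongs to the universal capping sample S^{(C,k)} if and only if ℓ_x + h_x < k. -/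
/-!
Writing the `Capp_T`-seed as `r / min T w = max (r / T) (r / w)`, the condition
`r_y / min(w_x, w_y) < r_x / w_x` says exactly `r_y < r_x` and `r_y / w_y < r_x / w_x`;
according to whether `w_y ≥ w_x` or `w_y < w_x`, one of these two inequalities implies the other,
which gives the split into the keys counted by `h_x` and by `ℓ_x`. The same two inequalities give
`max (r_y / T) (r_y / w_y) < max (r_x / T) (r_x / w_x)` for every `T > 0`, so the threshold
`T = w_x` minimises the number of keys with a smaller seed than `x`, and that number is `ℓ_x + h_x`.
-/

open Finset

theorem div_min_eq_max_div {r a b : ℝ} (hr : 0 ≤ r) (ha : 0 < a) (hb : 0 < b) :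
    r / min a b = max (r / a) (r / b) := by
  rcases le_total a b with hab | hba
  · rw [min_eq_left hab, max_eq_left (div_le_div_of_nonneg_left hr ha hab)]
  · rw [min_eq_right hba, max_eq_right (div_le_div_of_nonneg_left hr hb hba)]

theorem div_min_lt_div_iff {rx ry wx wy : ℝ} (hry : 0 ≤ ry) (hwx : 0 < wx) (hwy : 0 < wy) :
    ry / min wx wy < rx / wx ↔ ry < rx ∧ ry / wy < rx / wx := by
  rw [div_min_eq_max_div hry hwx hwy, max_lt_iff, div_lt_div_iff_of_pos_right hwx]

theorem div_min_lt_div_iff_or {rx ry wx wy : ℝ} (hry : 0 ≤ ry) (hwx : 0 < wx) (hwy : 0 < wy) :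
    ry / min wx wy < rx / wx ↔
      wx ≤ wy ∧ ry < rx ∨ wy < wx ∧ ry / wy < rx / wx := by
  rw [div_min_lt_div_iff hry hwx hwy]
  rcases le_or_gt wx wy with hle | hlt
  · have hdiv : ry / wy ≤ ry / wx := div_le_div_of_nonneg_left hry hwx hle
    have hrank : ry < rx → ry / wy < rx / wx := fun h =>
      hdiv.trans_lt ((div_lt_div_iff_of_pos_right hwx).2 h)
    simp only [hle, true_and, not_lt.2 hle, false_and, or_false]
    exact ⟨And.left, fun h => ⟨h, hrank h⟩⟩
  · have hdiv : ry / wx ≤ ry / wy := div_le_div_of_nonneg_left hry hwy hlt.le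
    have hrank : ry / wy < rx / wx → ry < rx := fun h =>
      (div_lt_div_iff_of_pos_right hwx).1 (hdiv.trans_lt h)
    simp only [hlt, true_and, not_le.2 hlt, false_and, false_or]
    exact ⟨And.right, fun h => ⟨hrank h, h⟩⟩

theorem div_min_lt_div_min_of_div_min_lt {rx ry wx wy T : ℝ} (hrx : 0 ≤ rx) (hry : 0 ≤ ry)
    (hwx : 0 < wx) (hwy : 0 < wy) (hT : 0 < T) (h : ry / min wx wy < rx / wx) :
    ry / min T wy < rx / min T wx := by
  obtain ⟨hrank, hnorm⟩ := (div_min_lt_div_iff hry hwx hwy).1 h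
  rw [div_min_eq_max_div hry hT hwy, div_min_eq_max_div hrx hT hwx, max_lt_iff]
  exact ⟨lt_max_of_lt_left ((div_lt_div_iff_of_pos_right hT).2 hrank), lt_max_of_lt_right hnorm⟩

section Keys

variable {X : Type*} [Fintype X] [DecidableEq X] {w r : X → ℝ}

theorem filter_div_min_weight_eq_union (hw : ∀ x, 0 < w x) (hr : ∀ x, 0 < r x) (x : X) :
    (univ.filter fun y => y ≠ x ∧ r y / min (w x) (w y) < r x / w x) =
      (univ.filter fun y => y ≠ x ∧ w x ≤ w y ∧ r y < r x) ∪
        (univ.filter fun y => y ≠ x ∧ w y < w x ∧ r y / w y < r x / w x) := by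
  rw [← filter_or]
  refine filter_congr fun y _ => ?_
  rw [div_min_lt_div_iff_or (hr y).le (hw x) (hw y), and_or_left]

theorem disjoint_filter_weight_le_filter_weight_lt (x : X) :
    Disjoint (univ.filter fun y => y ≠ x ∧ w x ≤ w y ∧ r y < r x)
      (univ.filter fun y => y ≠ x ∧ w y < w x ∧ r y / w y < r x / w x) :=
  disjoint_filter.2 fun _ _ hheavy hlight => not_le.2 hlight.2.1 hheavy.2.1

theorem filter_div_min_weight_subset (hw : ∀ x, 0 < w x) (hr : ∀ x, 0 < r x) (x : X) {T : ℝ}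
    (hT : 0 < T) :
    (univ.filter fun y => y ≠ x ∧ r y / min (w x) (w y) < r x / w x) ⊆
      univ.filter fun y => y ≠ x ∧ r y / min T (w y) < r x / min T (w x) :=
  monotone_filter_right _ fun y _ hy =>
    ⟨hy.1, div_min_lt_div_min_of_div_min_lt (hr x).le (hr y).le (hw x) (hw y) hT hy.2⟩

end Keys

theorem stmt17_general {X : Type*} [Fintype X] [DecidableEq X]
    (w r : X → ℝ) (hw : ∀ x, 0 < w x) (hr : ∀ x, 0 < r x)
    (k : ℕ) (x : X)
    (hx lx : ℕ)
    (hhx : hx = (Finset.univ.filter fun y =>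
      y ≠ x ∧ w x ≤ w y ∧ r y < r x).card)
    (hlx : lx = (Finset.univ.filter fun y =>
      y ≠ x ∧ w y < w x ∧ r y / w y < r x / w x).card) :
    (Finset.univ.filter fun y => y ≠ x ∧ r y / min (w x) (w y) < r x / w x) =
      (Finset.univ.filter fun y => y ≠ x ∧ w x ≤ w y ∧ r y < r x) ∪
        (Finset.univ.filter fun y => y ≠ x ∧ w y < w x ∧ r y / w y < r x / w x) ∧
    Disjoint
      (Finset.univ.filter fun y => y ≠ x ∧ w x ≤ w y ∧ r y < r x)
      (Finset.univ.filter fun y => y ≠ x ∧ w y < w x ∧ r y / w y < r x / w x) ∧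
    ((∃ T : ℝ, 0 < T ∧ (Finset.univ.filter fun y =>
        y ≠ x ∧ r y / min T (w y) < r x / min T (w x)).card < k) ↔
      lx + hx < k) := by
  have hsplit := filter_div_min_weight_eq_union hw hr x
  have hdisj := disjoint_filter_weight_le_filter_weight_lt (w := w) (r := r) x
  have hcard : (univ.filter fun y => y ≠ x ∧ r y / min (w x) (w y) < r x / w x).card = lx + hx := by
    rw [hsplit, card_union_of_disjoint hdisj, hhx, hlx, add_comm]
  refine ⟨hsplit, hdisj, ⟨fun ⟨T, hT, hlt⟩ => ?_, fun hlt => ⟨w x, hw x, ?_⟩⟩⟩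
  · exact hcard ▸ (card_le_card (filter_div_min_weight_subset hw hr x hT)).trans_lt hlt
  · simpa only [min_self, hcard] using hlt

/-- The keys with smaller `Capp_{w_x}`-seed than `x` split
disjointly into those counted by `h_x` (heavier keys with smaller rank) and those
counted by `ℓ_x` (lighter keys with smaller weight-normalized rank); consequently,
with no seed ties, `x` belongs to the universal capping sample `S^(C,k)` (the union
over `T > 0` of the bottom-`k` samples for `Capp_T`) iff `ℓ_x + h_x < k`. -/
theorem stmt17 {X : Type*} [Fintype X] [DecidableEq X]
    (w r : X → ℝ) (hw : ∀ x, 0 < w x) (hr : ∀ x, 0 < r x)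
    (hties : ∀ y z : X, y ≠ z → ∀ T : ℝ, 0 < T →
      r y / min T (w y) ≠ r z / min T (w z))
    (k : ℕ) (hk : 1 ≤ k) (x : X)
    (hx lx : ℕ)
    (hhx : hx = (Finset.univ.filter fun y =>
      y ≠ x ∧ w x ≤ w y ∧ r y < r x).card)
    (hlx : lx = (Finset.univ.filter fun y =>
      y ≠ x ∧ w y < w x ∧ r y / w y < r x / w x).card) :
    (Finset.univ.filter fun y => y ≠ x ∧ r y / min (w x) (w y) < r x / w x) =
      (Finset.univ.filter fun y => y ≠ x ∧ w x ≤ w y ∧ r y < r x) ∪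
        (Finset.univ.filter fun y => y ≠ x ∧ w y < w x ∧ r y / w y < r x / w x) ∧
    Disjoint
      (Finset.univ.filter fun y => y ≠ x ∧ w x ≤ w y ∧ r y < r x)
      (Finset.univ.filter fun y => y ≠ x ∧ w y < w x ∧ r y / w y < r x / w x) ∧
    ((∃ T : ℝ, 0 < T ∧ (Finset.univ.filter fun y =>
        y ≠ x ∧ r y / min T (w y) < r x / min T (w x)).card < k) ↔
      lx + hx < k) :=
  stmt17_general w r hw hr k x hx lx hhx hlx
end
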